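/- Let A be a 4×4 normal idempotent matrix with a_{32} + a_{41} < a_{31} + a_{42}, and set f_{kl} = a_{k1} + a_{l2} - a_{k2} - a_{l1}. With p = column 1, q = column 2, v¹³ = (-a_{41}, -a_{42}, a_{31}-a_{41}, 0), v²⁴ = (-a_{31}, -a_{32}, 0, a_{42}-a_{32}), the tropical distances satisfy: d(p, v¹³) = -f_{24}, d(q, v²⁴) = f_{13}, d(v¹³, v²⁴) = f_{34}, and d(p,q) = f_{12} = f_{13} + f_{34} + (-f_{24}). -/

import Mathlib

/-!
The tropical distance between `x` and `y` is the range `max (x - y) - min (x - y)`. For each of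
the four pairs the coordinates where `x - y` is extremal are located by the subadditivity
`a_{ik} + a_{kj} ≤ a_{ij}` of `A` (and, for `v¹³, v²⁴`, by the hypothesis
`a_{32} + a_{41} < a_{31} + a_{42}`), and the range is then read off as the claimed `f_{kl}`.
-/

/-- Normalized difference: the zero-last-coordinate representative of `p - q`. -/
noncomputable def normDiff (n : ℕ) (p q : Fin (n+1) → ℝ) : Fin (n+1) → ℝ :=
  fun i => (p i - q i) - (p (Fin.last n) - q (Fin.last n))

/-- The tropical distance on `ℝⁿ/ℝ(1,…,1)`. -/
noncomputable def tdist (n : ℕ) (p q : Fin (n+1) → ℝ) : ℝ :=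
  Finset.univ.sup' Finset.univ_nonempty
    (fun ij : Fin (n+1) × Fin (n+1) =>
      max |normDiff n p q ij.1| |normDiff n p q ij.1 - normDiff n p q ij.2|)

section TropicalDistance

variable {n : ℕ}

lemma normDiff_last (p q : Fin (n+1) → ℝ) : normDiff n p q (Fin.last n) = 0 := by
  simp [normDiff]

lemma normDiff_sub_normDiff (p q : Fin (n+1) → ℝ) (i j : Fin (n+1)) :
    normDiff n p q i - normDiff n p q j = (p i - q i) - (p j - q j) := by
  simp only [normDiff]; ring

theorem tdist_eq_of_forall_sub_le (p q : Fin (n+1) → ℝ) (a b : Fin (n+1))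
    (hmax : ∀ i, p i - q i ≤ p a - q a) (hmin : ∀ i, p b - q b ≤ p i - q i) :
    tdist n p q = (p a - q a) - (p b - q b) := by
  have hrange : ∀ i j, |normDiff n p q i - normDiff n p q j| ≤ (p a - q a) - (p b - q b) := by
    intro i j
    rw [normDiff_sub_normDiff, abs_sub_le_iff]
    constructor <;> linarith [hmax i, hmax j, hmin i, hmin j]
  apply le_antisymm
  · refine Finset.sup'_le _ _ fun ij _ => max_le ?_ (hrange ij.1 ij.2)
    simpa [normDiff_last] using hrange ij.1 (Fin.last n)
  · refine Finset.le_sup'_of_le _ (Finset.mem_univ (a, b)) (le_max_of_le_right ?_)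
    rw [normDiff_sub_normDiff]
    exact le_abs_self _

/-- Between two columns `k, l` of a normal idempotent matrix, `A i k - A i l` is largest at
`i = k` and smallest at `i = l`. -/
theorem tdist_cols_of_isNormalIdempotent (A : Matrix (Fin (n+1)) (Fin (n+1)) ℝ)
    (hdiag : ∀ i, A i i = 0) (hsub : ∀ i j k, A i k + A k j ≤ A i j) (k l : Fin (n+1)) :
    tdist n (fun i => A i k) (fun i => A i l) = -A k l - A l k := by
  rw [tdist_eq_of_forall_sub_le _ _ k l (fun i => by linarith [hsub i l k, hdiag k])
    (fun i => by linarith [hsub i k l, hdiag l])]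
  simp only [hdiag]
  ring

end TropicalDistance

section FourByFour

variable (A : Matrix (Fin 4) (Fin 4) ℝ)

lemma tdist_col_zero_v13 (h00 : A 0 0 = 0) (h : A 3 1 + A 1 0 ≤ A 3 0) :
    tdist 3 (fun i => A i 0) ![-(A 3 0), -(A 3 1), A 2 0 - A 3 0, 0] = A 3 0 - A 1 0 - A 3 1 := by
  rw [tdist_eq_of_forall_sub_le _ _ 0 1]
  · simp only [h00, Matrix.cons_val_zero, Matrix.cons_val_one, sub_neg_eq_add, zero_add]; ring
  all_goals intro i; fin_cases i <;> simp [h00] <;> linarith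

lemma tdist_col_one_v24 (h11 : A 1 1 = 0) (h : A 2 0 + A 0 1 ≤ A 2 1) :
    tdist 3 (fun i => A i 1) ![-(A 2 0), -(A 2 1), 0, A 3 1 - A 2 1] = A 2 1 - A 0 1 - A 2 0 := by
  rw [tdist_eq_of_forall_sub_le _ _ 1 0]
  · simp only [h11, Matrix.cons_val_zero, Matrix.cons_val_one, sub_neg_eq_add, zero_add]; ring
  all_goals intro i; fin_cases i <;> simp [h11] <;> linarith

lemma tdist_v13_v24 (h : A 2 1 + A 3 0 ≤ A 2 0 + A 3 1) :
    tdist 3 ![-(A 3 0), -(A 3 1), A 2 0 - A 3 0, 0] ![-(A 2 0), -(A 2 1), 0, A 3 1 - A 2 1] =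
      A 2 0 + A 3 1 - A 2 1 - A 3 0 := by
  rw [tdist_eq_of_forall_sub_le _ _ 0 1]
  · simp only [Matrix.cons_val_zero, Matrix.cons_val_one, sub_neg_eq_add]; ring
  all_goals intro i; fin_cases i <;> simp <;> linarith

end FourByFour

theorem stmt13_general (A : Matrix (Fin 4) (Fin 4) ℝ)
    (hdiag : ∀ i, A i i = 0)
    (hsub : ∀ i j k, A i k + A k j ≤ A i j)
    (htype : A 2 1 + A 3 0 < A 2 0 + A 3 1) :
    let f : Fin 4 → Fin 4 → ℝ := fun k l => A k 0 + A l 1 - A k 1 - A l 0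
    let p : Fin 4 → ℝ := fun i => A i 0
    let q : Fin 4 → ℝ := fun i => A i 1
    let v13 : Fin 4 → ℝ := ![-(A 3 0), -(A 3 1), A 2 0 - A 3 0, 0]
    let v24 : Fin 4 → ℝ := ![-(A 2 0), -(A 2 1), 0, A 3 1 - A 2 1]
    tdist 3 p v13 = -(f 1 3) ∧
    tdist 3 q v24 = f 0 2 ∧
    tdist 3 v13 v24 = f 2 3 ∧
    tdist 3 p q = f 0 1 ∧
    f 0 1 = f 0 2 + f 2 3 + (-(f 1 3)) := by
  intro f p q v13 v24
  refine ⟨?_, ?_, ?_, ?_, by simp only [f]; ring⟩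
  · rw [tdist_col_zero_v13 A (hdiag 0) (hsub 3 0 1)]
    simp only [f, hdiag 1]; ring
  · rw [tdist_col_one_v24 A (hdiag 1) (hsub 2 1 0)]
    simp only [f, hdiag 0]; ring
  · rw [tdist_v13_v24 A htype.le]
  · rw [tdist_cols_of_isNormalIdempotent A hdiag hsub 0 1]
    simp only [f, hdiag]; ring

/-- For a 4×4 normal idempotent matrix with `a_{32}+a_{41} < a_{31}+a_{42}` and
`f_{kl} = a_{k1}+a_{l2}-a_{k2}-a_{l1}`, with `p, q` the first two columns and
`v¹³ = (-a_{41},-a_{42},a_{31}-a_{41},0)`, `v²⁴ = (-a_{31},-a_{32},0,a_{42}-a_{32})`: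
`d(p,v¹³) = -f_{24}`, `d(q,v²⁴) = f_{13}`, `d(v¹³,v²⁴) = f_{34}`, and
`d(p,q) = f_{12} = f_{13} + f_{34} + (-f_{24})`. -/
theorem stmt13 (A : Matrix (Fin 4) (Fin 4) ℝ)
    (hdiag : ∀ i, A i i = 0) (hneg : ∀ i j, A i j ≤ 0)
    (hsub : ∀ i j k, A i k + A k j ≤ A i j)
    (htype : A 2 1 + A 3 0 < A 2 0 + A 3 1) :
    let f : Fin 4 → Fin 4 → ℝ := fun k l => A k 0 + A l 1 - A k 1 - A l 0
    let p : Fin 4 → ℝ := fun i => A i 0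
    let q : Fin 4 → ℝ := fun i => A i 1
    let v13 : Fin 4 → ℝ := ![-(A 3 0), -(A 3 1), A 2 0 - A 3 0, 0]
    let v24 : Fin 4 → ℝ := ![-(A 2 0), -(A 2 1), 0, A 3 1 - A 2 1]
    tdist 3 p v13 = -(f 1 3) ∧
    tdist 3 q v24 = f 0 2 ∧
    tdist 3 v13 v24 = f 2 3 ∧
    tdist 3 p q = f 0 1 ∧
    f 0 1 = f 0 2 + f 2 3 + (-(f 1 3)) :=
  stmt13_general A hdiag hsub htype
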